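/- Assume σ ≠ 0. The joint probability that the partition has exactly j blocks and the τ_i-th blocks (in uniformly random order) have the prescribed sizes satisfies P[K_n = j and N_{τ_i} = n_{τ_i} for all i = 1,…,p] = V_{n,j} · ((j−p)!/j!) · (n! / (n_{τ_1}!⋯n_{τ_p}!·(n − Σ_{i=1}^{p} n_{τ_i})!)) · ∏_{i=1}^{p} (1−σ)_{(n_{τ_i}−1)↑} · C(n − Σ_{i=1}^{p} n_{τ_i}, j−p; σ)/σ^{j−p}. -/

import Mathlib

open Finset

attribute [local instance] Classical.propDecidable

noncomputable section

/-- Rising factorial `x(x+1)⋯(x+N−1)`. -/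
def risingFac (x : ℝ) (N : ℕ) : ℝ := ∏ i ∈ Finset.range N, (x + i)

/-- Falling factorial `x(x−1)⋯(x−N+1)`. -/
def fallingFac (x : ℝ) (N : ℕ) : ℝ := ∏ i ∈ Finset.range N, (x - i)

/-- Noncentral generalized factorial coefficient `C(N,k;σ,γ)`. -/
def gfc (N k : ℕ) (σ γ : ℝ) : ℝ :=
  (1 / (Nat.factorial k : ℝ)) *
    ∑ i ∈ Finset.range (k + 1),
      (-1 : ℝ) ^ i * (Nat.choose k i : ℝ) * risingFac (-(i : ℝ) * σ - γ) N

/-- Central generalized factorial coefficient `C(N,k;σ)`. -/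
def cgfc (N k : ℕ) (σ : ℝ) : ℝ := gfc N k σ 0

/-- Binomial coefficient over `ℤ`, zero unless `0 ≤ b ≤ a`. -/
def ibinom (a b : ℤ) : ℝ :=
  if 0 ≤ b ∧ b ≤ a then (Nat.choose a.toNat b.toNat : ℝ) else 0

/-- Multinomial coefficient `m!/((l!)^r (m−rl)!)`, zero if `rl > m`. -/
def multinom (m l r : ℕ) : ℝ :=
  if r * l ≤ m then
    (Nat.factorial m : ℝ) / ((Nat.factorial l : ℝ) ^ r * (Nat.factorial (m - r * l) : ℝ))
  else 0

/-- `P` is a set partition of the finset `s`. -/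
def IsPartOn {α : Type*} (s : Finset α) (P : Finset (Finset α)) : Prop :=
  (∀ B ∈ P, B ⊆ s) ∧ ∅ ∉ P ∧ ∀ a ∈ s, ∃! B, B ∈ P ∧ a ∈ B

/-- Restriction of a partition to `s`. -/
def restrictPart {α : Type*} [DecidableEq α] (P : Finset (Finset α)) (s : Finset α) :
    Finset (Finset α) := (P.image fun C => C ∩ s).erase ∅

/-- Gibbs probability of a partition with block sizes `|C|` and `VN k` the Gibbs weight. -/
def gibbsW {α : Type*} (σ : ℝ) (VN : ℕ → ℝ) (P : Finset (Finset α)) : ℝ :=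
  VN P.card * ∏ C ∈ P, risingFac (1 - σ) (C.card - 1)

/-- Ewens–Pitman weight system. -/
def EPV (σ θ : ℝ) : ℕ → ℕ → ℝ :=
  fun N k => (∏ i ∈ Finset.range k, (θ + (i : ℝ) * σ)) / risingFac θ N

/-- The "old" elements `{1,…,n}` inside `{1,…,n+m}`. -/
def oldSet (n m : ℕ) : Finset (Fin (n + m)) :=
  Finset.univ.filter fun x => (x : ℕ) < n

/-- Number of new elements in the block of `ρ` containing the old block `Bi`. -/
def Scount (n m : ℕ) (Bi : Finset (Fin (n + m))) (ρ : Finset (Finset (Fin (n + m)))) : ℕ :=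
  ∑ C ∈ ρ.filter (fun C => Bi ⊆ C), (C \ oldSet n m).card

/-- Partitions of `{1,…,n+m}` extending the partition `πP` of the old elements. -/
def extensions (n m : ℕ) (πP : Finset (Finset (Fin (n + m)))) :
    Finset (Finset (Finset (Fin (n + m)))) :=
  Finset.univ.filter fun ρ => IsPartOn Finset.univ ρ ∧ restrictPart ρ (oldSet n m) = πP

/-- Conditional expectation given complete information (the initial partition `πP`). -/
def condExpPi (σ : ℝ) (V : ℕ → ℕ → ℝ) (n m : ℕ) (πP : Finset (Finset (Fin (n + m))))
    (f : Finset (Finset (Fin (n + m))) → ℝ) : ℝ :=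
  (∑ ρ ∈ extensions n m πP, f ρ * gibbsW σ (V (n + m)) ρ) /
    (∑ ρ ∈ extensions n m πP, gibbsW σ (V (n + m)) ρ)

/-- Partitions of `{1,…,n+m}` whose restriction to the old elements has exactly `j` blocks. -/
def withJ (n m j : ℕ) : Finset (Finset (Finset (Fin (n + m)))) :=
  Finset.univ.filter fun ρ =>
    IsPartOn Finset.univ ρ ∧ (restrictPart ρ (oldSet n m)).card = j

/-- Partitions of `s` with exactly `j` blocks. -/
def partsJOf {α : Type*} [Fintype α] (s : Finset α) (j : ℕ) :
    Finset (Finset (Finset α)) :=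
  Finset.univ.filter fun π' => IsPartOn s π' ∧ π'.card = j

/-- Conditional expectation given the incomplete information `K_n = j`. -/
def condExpK (σ : ℝ) (V : ℕ → ℕ → ℝ) (n m j : ℕ)
    (f : Finset (Finset (Fin (n + m))) → ℝ) : ℝ :=
  (∑ ρ ∈ withJ n m j, f ρ * gibbsW σ (V (n + m)) ρ) /
    (∑ π' ∈ partsJOf (oldSet n m) j, gibbsW σ (V n) π')

/-- Number of old blocks (indexed by `B`) re-observed in the additional sample. -/
def RcntB (n m j : ℕ) (B : Fin j → Finset (Fin (n + m)))
    (ρ : Finset (Finset (Fin (n + m)))) : ℕ :=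
  (Finset.univ.filter fun i : Fin j => Scount n m (B i) ρ ≠ 0).card

/-- Number of old blocks (indexed by `B`) re-observed with frequency `l`. -/
def RlcntB (n m j l : ℕ) (B : Fin j → Finset (Fin (n + m)))
    (ρ : Finset (Finset (Fin (n + m)))) : ℕ :=
  (Finset.univ.filter fun i : Fin j => Scount n m (B i) ρ = l).card

/-- Number of blocks of the restriction whose containing block has a new element. -/
def Rcnt (n m : ℕ) (ρ : Finset (Finset (Fin (n + m)))) : ℕ :=
  ((restrictPart ρ (oldSet n m)).filter fun Bi =>
    ∃ C ∈ ρ, Bi ⊆ C ∧ (C \ oldSet n m) ≠ ∅).card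

/-- Number of blocks of the restriction whose containing block has exactly `l` new elements. -/
def Rlcnt (n m l : ℕ) (ρ : Finset (Finset (Fin (n + m)))) : ℕ :=
  ((restrictPart ρ (oldSet n m)).filter fun Bi =>
    ∃ C ∈ ρ, Bi ⊆ C ∧ (C \ oldSet n m).card = l).card

/-- Number of bijections from `Fin j` onto the blocks of `π'` satisfying `Q`. -/
def bijCount {α : Type*} [Fintype α] (j : ℕ) (π' : Finset (Finset α))
    (Q : (Fin j → Finset α) → Prop) : ℕ :=
  ((Finset.univ : Finset (Fin j → Finset α)).filter fun β =>
    Function.Injective β ∧ Finset.image β Finset.univ = π' ∧ Q β).card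

/-- Conditional expectation given almost-complete information. -/
def condExpTau (σ : ℝ) (V : ℕ → ℕ → ℝ) (n m j p : ℕ) (τ : Fin p → Fin j) (nτ : Fin p → ℕ)
    (f : Finset (Finset (Fin (n + m))) → ℝ) : ℝ :=
  (∑ ρ ∈ withJ n m j,
      (bijCount j (restrictPart ρ (oldSet n m)) (fun β => ∀ i, (β (τ i)).card = nτ i) : ℝ) *
        f ρ * gibbsW σ (V (n + m)) ρ) /
    (∑ π' ∈ partsJOf (oldSet n m) j,
      (bijCount j π' (fun β => ∀ i, (β (τ i)).card = nτ i) : ℝ) * gibbsW σ (V n) π')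

/-!
A labelled partition of `{1,…,n}` into `j` blocks is the same thing as a surjection
`f : Fin n → Fin j` (block `i` is the fiber `f⁻¹ i`), so the left-hand side is `V n j / j!` times
the sum, over surjections whose fibers over `τ i` have `nτ i` points, of
`∏ c, (1-σ)_{(|f⁻¹ c| - 1)↑}`. Choosing these prescribed fibers one at a time produces the
multinomial coefficient and the factors `(1-σ)_{(nτ i - 1)↑}`, and leaves the unconstrained sum
over surjections from the remaining `N = n - ∑ nτ i` points onto the remaining `k = j - p` labels.

That sum is `k! C(N, k; σ) / σ^k`. Since `(-σ)_{m↑} = -σ (1-σ)_{(m-1)↑}`, it is `(-σ)^(-k)` times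
the sum over surjections of `∏ c, (-σ)_{|f⁻¹ c|↑}`. Over all maps into a `t`-set this sum is
`(-tσ)_{N↑}`, so inclusion–exclusion over the missed labels gives, up to the sign `(-1)^k`, the
alternating sum `∑ i, (-1)^i binom(k, i) (-iσ)_{N↑}` that defines `k! C(N, k; σ)`.
-/

lemma risingFac_zero (x : ℝ) : risingFac x 0 = 1 := by simp [risingFac]

lemma risingFac_succ_right (x : ℝ) (N : ℕ) : risingFac x (N + 1) = risingFac x N * (x + N) :=
  prod_range_succ _ _

lemma risingFac_succ_left (x : ℝ) (N : ℕ) : risingFac x (N + 1) = x * risingFac (x + 1) N := by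
  simp only [risingFac, prod_range_succ', Nat.cast_add, Nat.cast_one, Nat.cast_zero, add_zero]
  rw [mul_comm]
  exact congrArg (x * ·) (prod_congr rfl fun i _ => by ring)

section Fibers

variable {α κ : Type*} [Fintype α]

def fiberFinset (f : α → κ) (c : κ) : Finset α := univ.filter fun x => f x = c

def fiberCard (f : α → κ) (c : κ) : ℕ := (fiberFinset f c).card

@[simp]
lemma mem_fiberFinset {f : α → κ} {c : κ} {x : α} : x ∈ fiberFinset f c ↔ f x = c := by
  simp [fiberFinset]

lemma sum_fiberCard_of_mapsTo {f : α → κ} {T : Finset κ} (hf : ∀ x, f x ∈ T) :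
    ∑ c ∈ T, fiberCard f c = Fintype.card α :=
  (card_eq_sum_card_fiberwise fun x _ => hf x).symm

lemma fiberCard_equiv_comp {α' κ' : Type*} [Fintype α'] (e₁ : α ≃ α') (e₂ : κ ≃ κ')
    (f : α → κ) (c : κ) : fiberCard (e₂ ∘ f ∘ e₁.symm) (e₂ c) = fiberCard f c := by
  refine (card_equiv e₁ fun x => ?_).symm
  simp [e₂.apply_eq_iff_eq]

lemma prod_risingFac_fiberCard_of_surjective [Fintype κ] (x : ℝ) {f : α → κ}
    (hf : Function.Surjective f) :
    ∏ c, risingFac x (fiberCard f c) =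
      x ^ Fintype.card κ * ∏ c, risingFac (x + 1) (fiberCard f c - 1) := by
  rw [← card_univ, ← prod_const, ← prod_mul_distrib]
  refine prod_congr rfl fun c _ => ?_
  obtain ⟨a, ha⟩ := hf c
  have hpos : 0 < fiberCard f c := card_pos.2 ⟨a, by simpa using ha⟩
  rw [← risingFac_succ_left, Nat.sub_add_cancel hpos]

end Fibers

section Surjections

def surjections (α κ : Type*) [Fintype α] [Fintype κ] : Finset (α → κ) :=
  univ.filter fun f => Function.Surjective f

def surjWeight (u : ℕ → ℝ) (α κ : Type*) [Fintype α] [Fintype κ] : ℝ :=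
  ∑ f ∈ surjections α κ, ∏ c, u (fiberCard f c)

variable {α κ : Type*} [Fintype α] [Fintype κ]

lemma mem_surjections {f : α → κ} : f ∈ surjections α κ ↔ Function.Surjective f := by
  simp [surjections]

lemma surjWeight_congr (u : ℕ → ℝ) {α' κ' : Type*} [Fintype α'] [Fintype κ'] (e₁ : α ≃ α')
    (e₂ : κ ≃ κ') : surjWeight u α κ = surjWeight u α' κ' := by
  refine sum_equiv (e₁.arrowCongr e₂) (fun f => ?_) fun f _ => ?_
  · rw [mem_surjections, mem_surjections]
    change _ ↔ Function.Surjective (e₂ ∘ f ∘ e₁.symm)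
    rw [Equiv.comp_surjective, Equiv.surjective_comp]
  · exact Fintype.prod_equiv e₂ _ _ fun c => by
      change u (fiberCard f c) = u (fiberCard (e₂ ∘ f ∘ e₁.symm) (e₂ c))
      rw [fiberCard_equiv_comp]

lemma sum_surjections_eq_sum_powerset {G : Type*} [DecidableEq α] [AddCommGroup G]
    (F : (α → κ) → G) :
    ∑ f ∈ surjections α κ, F f =
      ∑ t ∈ (univ : Finset κ).powerset, (-1 : ℤ) ^ t.card •
        ∑ f ∈ Fintype.piFinset (fun _ : α => tᶜ), F f := by
  have hsurj : (univ.inf fun c : κ => (univ.filter fun f : α → κ => ∀ x, f x ≠ c)ᶜ) =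
      surjections α κ := by
    ext f
    rw [mem_surjections]
    simp only [mem_inf, mem_compl, mem_filter, mem_univ, true_and, not_forall, not_not,
      true_implies, Function.Surjective]
  have hmiss : ∀ t : Finset κ, (t.inf fun c => univ.filter fun f : α → κ => ∀ x, f x ≠ c) =
      Fintype.piFinset (fun _ : α => tᶜ) := by
    intro t
    ext f
    simp only [mem_inf, mem_filter, mem_univ, true_and, Fintype.mem_piFinset, mem_compl]
    exact ⟨fun h x hx => h _ hx x rfl, fun h c hc x hfc => h x (hfc ▸ hc)⟩
  have h := inclusion_exclusion_sum_inf_compl univ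
    (fun c : κ => univ.filter fun f : α → κ => ∀ x, f x ≠ c) F
  simp only [hsurj, hmiss] at h
  exact h

end Surjections

section GeneralizedFactorialCoefficients

lemma sum_piFinset_const_fin_succ {M κ : Type*} [AddCommMonoid M] {N : ℕ} (T : Finset κ)
    (F : (Fin (N + 1) → κ) → M) :
    ∑ f ∈ Fintype.piFinset (fun _ : Fin (N + 1) => T), F f =
      ∑ c ∈ T, ∑ g ∈ Fintype.piFinset (fun _ : Fin N => T), F (Fin.cons c g) := by
  have h := filter_piFinset_eq_map_consEquiv (fun _ : Fin (N + 1) => T) (fun _ => True)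
  simp only [filter_true] at h
  rw [h, sum_map, sum_product]
  rfl

lemma fiberCard_cons {κ : Type*} {N : ℕ} (c₀ : κ) (f : Fin N → κ) (c : κ) :
    fiberCard (Fin.cons c₀ f : Fin (N + 1) → κ) c = fiberCard f c + if c₀ = c then 1 else 0 := by
  simp only [fiberCard, fiberFinset, card_filter, Fin.sum_univ_succ, Fin.cons_zero, Fin.cons_succ]
  ring

variable {κ : Type*} [Fintype κ]

lemma prod_risingFac_fiberCard_cons (x : ℝ) {N : ℕ} (c₀ : κ) (g : Fin N → κ) :
    ∏ c, risingFac x (fiberCard (Fin.cons c₀ g : Fin (N + 1) → κ) c) =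
      (x + fiberCard g c₀) * ∏ c, risingFac x (fiberCard g c) := by
  rw [← mul_prod_erase _ _ (mem_univ c₀),
    ← mul_prod_erase _ (fun c => risingFac x (fiberCard g c)) (mem_univ c₀), fiberCard_cons,
    if_pos rfl, risingFac_succ_right, mul_comm (risingFac x _), mul_assoc]
  refine congrArg _ (congrArg _ (prod_congr rfl fun c hc => ?_))
  rw [fiberCard_cons, if_neg (ne_of_mem_erase hc).symm, add_zero]

lemma sum_piFinset_prod_risingFac_fiberCard (x : ℝ) (T : Finset κ) (N : ℕ) :
    ∑ f ∈ Fintype.piFinset (fun _ : Fin N => T), ∏ c, risingFac x (fiberCard f c) =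
      risingFac (T.card * x) N := by
  induction N with
  | zero => simp [fiberCard, fiberFinset, risingFac_zero]
  | succ N ih =>
    have hmass : ∀ g ∈ Fintype.piFinset (fun _ : Fin N => T),
        ∑ c ∈ T, (fiberCard g c : ℝ) = N := by
      intro g hg
      rw [← Nat.cast_sum, sum_fiberCard_of_mapsTo (Fintype.mem_piFinset.1 hg), Fintype.card_fin]
    rw [sum_piFinset_const_fin_succ, sum_comm]
    simp_rw [prod_risingFac_fiberCard_cons, ← sum_mul]
    rw [risingFac_succ_right, ← ih, sum_mul]
    refine sum_congr rfl fun g hg => ?_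
    rw [sum_add_distrib, sum_const, hmass g hg, nsmul_eq_mul]
    ring

lemma sum_surjections_prod_risingFac_fiberCard (x : ℝ) (N : ℕ) :
    ∑ f ∈ surjections (Fin N) κ, ∏ c, risingFac x (fiberCard f c) =
      ∑ m ∈ range (Fintype.card κ + 1),
        (-1) ^ m * (Fintype.card κ).choose m * risingFac ((Fintype.card κ - m : ℕ) * x) N := by
  rw [sum_surjections_eq_sum_powerset]
  simp only [sum_piFinset_prod_risingFac_fiberCard, card_compl]
  rw [sum_powerset_apply_card
    (fun m => (-1 : ℤ) ^ m • risingFac ((Fintype.card κ - m : ℕ) * x) N)]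
  refine sum_congr (by rw [card_univ]) fun m _ => ?_
  simp only [card_univ, nsmul_eq_mul, zsmul_eq_mul]
  push_cast
  ring

lemma factorial_mul_cgfc (N k : ℕ) (σ : ℝ) :
    (k.factorial : ℝ) * cgfc N k σ = (-1) ^ k *
      ∑ m ∈ range (k + 1), (-1) ^ m * k.choose m * risingFac ((k - m : ℕ) * -σ) N := by
  have hk : (k.factorial : ℝ) ≠ 0 := by positivity
  rw [cgfc, gfc, ← mul_assoc, mul_one_div_cancel hk, one_mul, ← sum_range_reflect, mul_sum]
  refine sum_congr rfl fun m hm => ?_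
  have hmk : m ≤ k := Nat.lt_succ_iff.1 (mem_range.1 hm)
  have hsign : ((-1 : ℝ)) ^ (k - m) = (-1) ^ k * (-1) ^ m := by
    obtain ⟨d, rfl⟩ := Nat.exists_eq_add_of_le hmk
    rw [Nat.add_sub_cancel_left, pow_add, mul_comm, ← mul_assoc, ← pow_add, ← two_mul, pow_mul]
    simp
  rw [add_tsub_cancel_right, Nat.choose_symm hmk, hsign, sub_zero, neg_mul, mul_neg]
  ring

lemma surjWeight_risingFac_one_sub {σ : ℝ} (hσ : σ ≠ 0) (N : ℕ) :
    surjWeight (fun m => risingFac (1 - σ) (m - 1)) (Fin N) κ =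
      (Fintype.card κ).factorial * cgfc N (Fintype.card κ) σ / σ ^ Fintype.card κ := by
  have h := sum_surjections_prod_risingFac_fiberCard (κ := κ) (-σ) N
  rw [sum_congr rfl fun f hf =>
      prod_risingFac_fiberCard_of_surjective (-σ) (mem_surjections.1 hf),
    ← mul_sum, neg_add_eq_sub] at h
  rw [eq_div_iff (pow_ne_zero _ hσ), factorial_mul_cgfc, ← h, ← mul_assoc, ← mul_pow,
    neg_one_mul, neg_neg, mul_comm]
  rfl

end GeneralizedFactorialCoefficients

section RestrictFiber

variable {α κ : Type*} (c₀ : κ) (A : Finset α)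

def restrictFiber : {f : α → κ // ∀ x, f x = c₀ ↔ x ∈ A} ≃ ({x // x ∉ A} → {c // c ≠ c₀}) where
  toFun f x := ⟨f.1 x.1, fun h => x.2 ((f.2 x).1 h)⟩
  invFun g := ⟨fun x => if h : x ∈ A then c₀ else (g ⟨x, h⟩).1, fun x => by
    by_cases h : x ∈ A <;> simp [h, (g _).2]⟩
  left_inv f := by
    ext x
    by_cases h : x ∈ A
    · simp [h, (f.2 x).2 h]
    · simp [h]
  right_inv g := by
    ext x
    simp [x.2]

variable {c₀ A}

@[simp]
lemma coe_restrictFiber_apply (f : {f : α → κ // ∀ x, f x = c₀ ↔ x ∈ A}) (x : {x // x ∉ A}) :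
    (restrictFiber c₀ A f x : κ) = f.1 x := rfl

lemma surjective_restrictFiber_iff (hA : A.Nonempty) (f : {f : α → κ // ∀ x, f x = c₀ ↔ x ∈ A}) :
    Function.Surjective (restrictFiber c₀ A f) ↔ Function.Surjective f.1 := by
  constructor
  · intro h c
    by_cases hc : c = c₀
    · obtain ⟨x, hx⟩ := hA
      exact ⟨x, hc ▸ (f.2 x).2 hx⟩
    · obtain ⟨x, hx⟩ := h ⟨c, hc⟩
      exact ⟨x.1, congrArg Subtype.val hx⟩
  · intro h c
    obtain ⟨x, hx⟩ := h c.1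
    have hxA : x ∉ A := fun hxA => c.2 (hx ▸ (f.2 x).2 hxA)
    exact ⟨⟨x, hxA⟩, Subtype.ext hx⟩

variable [Fintype α]

lemma fiberCard_eq_card_of_forall_iff {f : α → κ} (hf : ∀ x, f x = c₀ ↔ x ∈ A) :
    fiberCard f c₀ = A.card := by
  unfold fiberCard
  congr 1
  ext x
  simp [hf x]

lemma fiberCard_restrictFiber (f : {f : α → κ // ∀ x, f x = c₀ ↔ x ∈ A}) (c : {c // c ≠ c₀}) :
    fiberCard (restrictFiber c₀ A f) c = fiberCard f.1 c.1 := by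
  refine card_nbij Subtype.val (fun x hx => ?_) Subtype.val_injective.injOn fun x hx => ?_
  · simpa [Subtype.ext_iff] using hx
  · have hfx : f.1 x = c.1 := by simpa using hx
    have hxA : x ∉ A := fun hxA => c.2 (hfx ▸ (f.2 x).2 hxA)
    exact ⟨⟨x, hxA⟩, by simpa [Subtype.ext_iff] using hfx, rfl⟩

lemma prod_fiberCard_eq_mul_prod_restrictFiber [Fintype κ] (u : ℕ → ℝ)
    (f : {f : α → κ // ∀ x, f x = c₀ ↔ x ∈ A}) :
    ∏ c, u (fiberCard f.1 c) = u A.card * ∏ c, u (fiberCard (restrictFiber c₀ A f) c) := by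
  rw [Fintype.prod_eq_mul_prod_subtype_ne _ c₀, fiberCard_eq_card_of_forall_iff f.2]
  simp only [fiberCard_restrictFiber]

lemma sum_surjections_filter_fiber_eq [Fintype κ] (u : ℕ → ℝ) (hA : A.Nonempty)
    (P : (α → κ) → Prop) [DecidablePred P] (P' : ({x // x ∉ A} → {c // c ≠ c₀}) → Prop)
    [DecidablePred P'] (hP : ∀ f, P f.1 ↔ P' (restrictFiber c₀ A f)) :
    ∑ f ∈ ((surjections α κ).filter P).filter (fun f => fiberFinset f c₀ = A),
        ∏ c, u (fiberCard f c) =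
      u A.card * ∑ g ∈ (surjections _ _).filter P', ∏ c, u (fiberCard g c) := by
  have hfiber : ∀ f : α → κ, fiberFinset f c₀ = A ↔ ∀ x, f x = c₀ ↔ x ∈ A := by
    intro f
    simp [Finset.ext_iff]
  rw [mul_sum]
  refine sum_bij' (fun f hf => restrictFiber c₀ A ⟨f, (hfiber f).1 (mem_filter.1 hf).2⟩)
    (fun g _ => ((restrictFiber c₀ A).symm g).1) (fun f hf => ?_) (fun g hg => ?_)
    (fun f hf => by simp) (fun g hg => by simp) (fun f hf => ?_)
  · simp only [mem_filter, mem_surjections] at hf ⊢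
    rw [surjective_restrictFiber_iff hA, ← hP]
    exact hf.1
  · simp only [mem_filter, mem_surjections] at hg ⊢
    set f := (restrictFiber c₀ A).symm g
    refine ⟨⟨(surjective_restrictFiber_iff hA f).1 ?_, (hP f).2 ?_⟩, (hfiber _).2 f.2⟩ <;>
      simp [f, hg]
  · exact prod_fiberCard_eq_mul_prod_restrictFiber u ⟨f, _⟩

end RestrictFiber

lemma card_subtype_notMem_finset {α : Type*} [Fintype α] (A : Finset α) :
    Fintype.card {x // x ∉ A} = Fintype.card α - A.card := by
  simp [Fintype.card_subtype_compl]

lemma card_subtype_ne {κ : Type*} [Fintype κ] (c : κ) :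
    Fintype.card {x // x ≠ c} = Fintype.card κ - 1 := by
  simp [Fintype.card_subtype_compl]

lemma sum_surjections_fiberCard_filter_fiber_eq {α κ : Type*} [Fintype α] [Fintype κ]
    (u : ℕ → ℝ) {p : ℕ} {τ : Fin (p + 1) → κ} (hτ : Function.Injective τ) {nτ : Fin (p + 1) → ℕ}
    (hnτ : ∀ i, 1 ≤ nτ i) {A : Finset α} (hA : A.card = nτ 0) :
    ∑ f ∈ ((surjections α κ).filter fun f => ∀ i, fiberCard f (τ i) = nτ i).filter
        (fun f => fiberFinset f (τ 0) = A), ∏ c, u (fiberCard f c) =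
      u (nτ 0) * ∑ g ∈ (surjections {x // x ∉ A} {c // c ≠ τ 0}).filter
        (fun g => ∀ i : Fin p, fiberCard g ⟨τ i.succ, hτ.ne (Fin.succ_ne_zero i)⟩ = nτ i.succ),
        ∏ c, u (fiberCard g c) := by
  rw [sum_surjections_filter_fiber_eq u (card_pos.1 (hA ▸ hnτ 0)) _
    (fun g => ∀ i : Fin p, fiberCard g ⟨τ i.succ, hτ.ne (Fin.succ_ne_zero i)⟩ = nτ i.succ)
    fun f => ?_, hA]
  rw [Fin.forall_fin_succ, fiberCard_eq_card_of_forall_iff f.2, hA]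
  simp [fiberCard_restrictFiber]

lemma factorials_mul_sum_surjections_fiberCard_eq (u : ℕ → ℝ) {p : ℕ} :
    ∀ {α κ : Type*} [Fintype α] [Fintype κ] (τ : Fin p → κ), Function.Injective τ →
    ∀ (nτ : Fin p → ℕ), (∀ i, 1 ≤ nτ i) → ∑ i, nτ i ≤ Fintype.card α →
      (∏ i, ((nτ i).factorial : ℝ)) * (Fintype.card α - ∑ i, nτ i).factorial *
          ∑ f ∈ (surjections α κ).filter (fun f => ∀ i, fiberCard f (τ i) = nτ i),
            ∏ c, u (fiberCard f c) =
        (Fintype.card α).factorial * (∏ i, u (nτ i)) *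
          surjWeight u (Fin (Fintype.card α - ∑ i, nτ i)) (Fin (Fintype.card κ - p)) := by
  induction p with
  | zero =>
    intro α κ _ _ τ _ nτ _ _
    rw [Fin.sum_univ_zero, Fin.prod_univ_zero, Fin.prod_univ_zero, Nat.sub_zero, Nat.sub_zero,
      one_mul, mul_one, filter_true_of_mem fun f _ => finZeroElim]
    exact congrArg _ (surjWeight_congr u (Fintype.equivFin α) (Fintype.equivFin κ))
  | succ p ih =>
    intro α κ _ _ τ hτ nτ hnτ hsum
    set N := Fintype.card α
    have hsum_succ : ∑ i, nτ i = nτ 0 + ∑ i : Fin p, nτ i.succ := Fin.sum_univ_succ nτ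
    have hn0 : nτ 0 ≤ N := (Nat.le_add_right _ _).trans (hsum_succ ▸ hsum)
    have hblock : ∀ A ∈ powersetCard (nτ 0) (univ : Finset α),
        (∏ i, ((nτ i).factorial : ℝ)) * (N - ∑ i, nτ i).factorial *
          ∑ f ∈ ((surjections α κ).filter fun f => ∀ i, fiberCard f (τ i) = nτ i).filter
            (fun f => fiberFinset f (τ 0) = A), ∏ c, u (fiberCard f c) =
        (nτ 0).factorial * (N - nτ 0).factorial * (∏ i, u (nτ i)) *
          surjWeight u (Fin (N - ∑ i, nτ i)) (Fin (Fintype.card κ - (p + 1))) := by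
      intro A hA
      have hAcard := (mem_powersetCard.1 hA).2
      have hA' : Fintype.card {x // x ∉ A} = N - nτ 0 := by
        rw [card_subtype_notMem_finset, hAcard]
      have h := ih (α := {x // x ∉ A}) (κ := {c // c ≠ τ 0}) (fun i => ⟨τ i.succ, hτ.ne (Fin.succ_ne_zero i)⟩)
        (fun i i' h => Fin.succ_injective _ (hτ (congrArg Subtype.val h))) (fun i => nτ i.succ)
        (fun i => hnτ i.succ) (by rw [hA']; omega)
      rw [hA', card_subtype_ne, Nat.sub_sub, ← hsum_succ, Nat.sub_sub, add_comm 1 p] at h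
      rw [sum_surjections_fiberCard_filter_fiber_eq u hτ hnτ hAcard, Fin.prod_univ_succ,
        Fin.prod_univ_succ]
      linear_combination ((nτ 0).factorial * u (nτ 0) : ℝ) * h
    rw [← sum_fiberwise_of_maps_to (g := fun f : α → κ => fiberFinset f (τ 0))
      (t := powersetCard (nτ 0) univ) fun f hf => ?_, mul_sum, sum_congr rfl hblock, sum_const,
      card_powersetCard, card_univ, nsmul_eq_mul]
    · rw [← Nat.choose_mul_factorial_mul_factorial hn0]
      push_cast
      ring
    · exact mem_powersetCard.2 ⟨subset_univ _, (mem_filter.1 hf).2 0⟩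

section LabelledPartitions

variable {α κ : Type*} [Fintype α]

lemma fiberFinset_injective : Function.Injective (fiberFinset : (α → κ) → κ → Finset α) := by
  intro f g h
  funext x
  have hx : x ∈ fiberFinset g (f x) := h ▸ mem_fiberFinset.2 rfl
  exact (mem_fiberFinset.1 hx).symm

lemma injective_fiberFinset {f : α → κ} (hf : Function.Surjective f) :
    Function.Injective (fiberFinset f) := by
  intro c c' h
  obtain ⟨x, rfl⟩ := hf c
  exact mem_fiberFinset.1 (h ▸ mem_fiberFinset.2 rfl)

lemma isPartOn_image_fiberFinset [Fintype κ] {f : α → κ} (hf : Function.Surjective f) :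
    IsPartOn univ (univ.image (fiberFinset f)) := by
  refine ⟨fun _ _ => subset_univ _, fun h => ?_, fun x _ => ⟨fiberFinset f (f x), ?_, ?_⟩⟩
  · obtain ⟨c, -, hc⟩ := mem_image.1 h
    obtain ⟨x, hx⟩ := hf c
    simpa [hc] using mem_fiberFinset.2 hx
  · exact ⟨mem_image_of_mem _ (mem_univ _), mem_fiberFinset.2 rfl⟩
  · rintro B ⟨hB, hxB⟩
    obtain ⟨c, -, rfl⟩ := mem_image.1 hB
    rw [mem_fiberFinset.1 hxB]

lemma exists_eq_fiberFinset [Fintype κ] {β : κ → Finset α} (hβ : IsPartOn univ (univ.image β))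
    (hinj : Function.Injective β) : ∃ f : α → κ, Function.Surjective f ∧ fiberFinset f = β := by
  have hblock : ∀ x, ∃! c, x ∈ β c := by
    intro x
    obtain ⟨B, ⟨hB, hxB⟩, huniq⟩ := hβ.2.2 x (mem_univ x)
    obtain ⟨c, -, rfl⟩ := mem_image.1 hB
    exact ⟨c, hxB, fun c' hc' => hinj (huniq _ ⟨mem_image_of_mem _ (mem_univ _), hc'⟩)⟩
  choose f hf huniq using hblock
  have hfib : fiberFinset f = β := by
    funext c
    ext x
    exact mem_fiberFinset.trans ⟨fun h => h ▸ hf x, fun h => (huniq x c h).symm⟩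
  refine ⟨f, fun c => ?_, hfib⟩
  obtain ⟨x, hx⟩ := nonempty_iff_ne_empty.2 fun h =>
    hβ.2.1 (h ▸ mem_image_of_mem β (mem_univ c))
  exact ⟨x, (huniq x c hx).symm⟩

lemma sum_partsJOf_bijCount_mul {j : ℕ} (Q : (Fin j → Finset α) → Prop)
    (G : Finset (Finset α) → ℝ) :
    ∑ π' ∈ partsJOf (univ : Finset α) j, (bijCount j π' Q : ℝ) * G π' =
      ∑ β ∈ univ.filter (fun β : Fin j → Finset α =>
          Function.Injective β ∧ IsPartOn univ (univ.image β) ∧ Q β), G (univ.image β) := by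
  rw [← sum_fiberwise_of_maps_to (g := fun β : Fin j → Finset α => univ.image β)
    (t := partsJOf univ j) fun β hβ => ?_]
  · refine sum_congr rfl fun π' hπ' => ?_
    rw [bijCount, ← nsmul_eq_mul, ← sum_const]
    refine sum_congr ?_ fun β hβ => by rw [(mem_filter.1 hβ).2]
    ext β
    simp only [mem_filter, mem_univ, true_and]
    constructor
    · rintro ⟨hinj, rfl, hQ⟩
      exact ⟨⟨hinj, ((mem_filter.1 hπ').2).1, hQ⟩, rfl⟩
    · rintro ⟨⟨hinj, -, hQ⟩, rfl⟩
      exact ⟨hinj, rfl, hQ⟩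
  · obtain ⟨hinj, hpart, -⟩ := (mem_filter.1 hβ).2
    simp only [partsJOf, mem_filter, mem_univ, true_and]
    exact ⟨hpart, by rw [card_image_of_injective _ hinj, card_univ, Fintype.card_fin]⟩

lemma sum_partsJOf_bijCount_mul_prod_eq_sum_surjections {j : ℕ} (Q : (Fin j → Finset α) → Prop)
    (P : (α → Fin j) → Prop) [DecidablePred P] (hPQ : ∀ f, P f ↔ Q (fiberFinset f)) (g : ℕ → ℝ) :
    ∑ π' ∈ partsJOf (univ : Finset α) j, (bijCount j π' Q : ℝ) * ∏ C ∈ π', g C.card =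
      ∑ f ∈ (surjections α (Fin j)).filter P, ∏ c, g (fiberCard f c) := by
  rw [sum_partsJOf_bijCount_mul]
  refine (sum_bij (fun f _ => fiberFinset f) (fun f hf => ?_)
    (fun f _ f' _ h => fiberFinset_injective h) (fun β hβ => ?_) (fun f hf => ?_)).symm
  · obtain ⟨hsurj, hQ⟩ := mem_filter.1 hf
    have hsurj := mem_surjections.1 hsurj
    simp only [mem_filter, mem_univ, true_and]
    exact ⟨injective_fiberFinset hsurj, isPartOn_image_fiberFinset hsurj, (hPQ f).1 hQ⟩
  · obtain ⟨hinj, hpart, hQ⟩ := (mem_filter.1 hβ).2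
    obtain ⟨f, hsurj, rfl⟩ := exists_eq_fiberFinset hpart hinj
    exact ⟨f, mem_filter.2 ⟨mem_surjections.2 hsurj, (hPQ f).2 hQ⟩, rfl⟩
  · have hsurj := mem_surjections.1 (mem_filter.1 hf).1
    rw [prod_image fun c _ c' _ h => injective_fiberFinset hsurj h]
    rfl

end LabelledPartitions

theorem joint_blocks_sizes_distribution_general
    (n j p : ℕ)
    (σ : ℝ) (hσ0 : σ ≠ 0)
    (V : ℕ → ℕ → ℝ)
    (τ : Fin p → Fin j) (hτ : StrictMono τ)
    (nτ : Fin p → ℕ) (hnτ : ∀ i, 1 ≤ nτ i) (hnτsum : (∑ i, nτ i) ≤ n - (j - p)) :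
    (1 / (Nat.factorial j : ℝ)) *
        ∑ π' ∈ partsJOf (Finset.univ : Finset (Fin n)) j,
          (bijCount j π' (fun β => ∀ i, (β (τ i)).card = nτ i) : ℝ) *
            gibbsW σ (V n) π' =
      V n j * ((Nat.factorial (j - p) : ℝ) / (Nat.factorial j : ℝ)) *
        ((Nat.factorial n : ℝ) /
          ((∏ i, (Nat.factorial (nτ i) : ℝ)) * (Nat.factorial (n - ∑ i, nτ i) : ℝ))) *
        (∏ i, risingFac (1 - σ) (nτ i - 1)) *
        cgfc (n - ∑ i, nτ i) (j - p) σ / σ ^ (j - p) := by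
  have hgibbs : ∀ π' ∈ partsJOf (univ : Finset (Fin n)) j,
      (bijCount j π' (fun β => ∀ i, (β (τ i)).card = nτ i) : ℝ) * gibbsW σ (V n) π' =
        V n j * ((bijCount j π' (fun β => ∀ i, (β (τ i)).card = nτ i) : ℝ) *
          ∏ C ∈ π', risingFac (1 - σ) (C.card - 1)) := fun π' hπ' => by
    rw [gibbsW, (mem_filter.1 hπ').2.2]
    ring
  have hsurj := factorials_mul_sum_surjections_fiberCard_eq (α := Fin n)
    (fun m => risingFac (1 - σ) (m - 1)) τ hτ.injective nτ hnτ
    (by simpa using hnτsum.trans (Nat.sub_le _ _))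
  simp only [surjWeight_risingFac_one_sub hσ0, Fintype.card_fin] at hsurj
  rw [mul_div_assoc', eq_div_iff (pow_ne_zero _ hσ0)] at hsurj
  rw [sum_congr rfl hgibbs, ← mul_sum,
    sum_partsJOf_bijCount_mul_prod_eq_sum_surjections _ (fun f => ∀ i, fiberCard f (τ i) = nτ i)
      (fun _ => Iff.rfl) fun m => risingFac (1 - σ) (m - 1)]
  field_simp
  linear_combination V n j * hsurj

/-- joint distribution of the number of blocks and a subset of the
block sizes under a Gibbs-type partition. -/
theorem joint_blocks_sizes_distribution
    (n j p : ℕ) (hn : 1 ≤ n) (hp1 : 1 ≤ p) (hpj : p ≤ j) (hjn : j ≤ n)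
    (σ : ℝ) (hσ1 : σ < 1) (hσ0 : σ ≠ 0)
    (V : ℕ → ℕ → ℝ) (hV11 : V 1 1 = 1)
    (hVnn : ∀ N k, 1 ≤ k → k ≤ N → 0 ≤ V N k)
    (hVrec : ∀ N k, 1 ≤ k → k ≤ N →
      V N k = V (N + 1) (k + 1) + ((N : ℝ) - (k : ℝ) * σ) * V (N + 1) k)
    (τ : Fin p → Fin j) (hτ : StrictMono τ)
    (nτ : Fin p → ℕ) (hnτ : ∀ i, 1 ≤ nτ i) (hnτsum : (∑ i, nτ i) ≤ n - (j - p)) :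
    (1 / (Nat.factorial j : ℝ)) *
        ∑ π' ∈ partsJOf (Finset.univ : Finset (Fin n)) j,
          (bijCount j π' (fun β => ∀ i, (β (τ i)).card = nτ i) : ℝ) *
            gibbsW σ (V n) π' =
      V n j * ((Nat.factorial (j - p) : ℝ) / (Nat.factorial j : ℝ)) *
        ((Nat.factorial n : ℝ) /
          ((∏ i, (Nat.factorial (nτ i) : ℝ)) * (Nat.factorial (n - ∑ i, nτ i) : ℝ))) *
        (∏ i, risingFac (1 - σ) (nτ i - 1)) *
        cgfc (n - ∑ i, nτ i) (j - p) σ / σ ^ (j - p) :=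
  joint_blocks_sizes_distribution_general n j p σ hσ0 V τ hτ nτ hnτ hnτsum
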